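/- arXiv:2510.04606 — 2 statements merged into one kernel-verified Lean document; each statement's English description precedes it below -/
import Mathlib

section
/- (Envelope theorem for the proximal closed-form last layer, Theorem 2.) Let o, d, n, N be positive integers, λ > 0, Y ∈ ℝ^{o×n}, W₀ ∈ ℝ^{o×d}, and let Φ : ℝ^N → ℝ^{d×n} be differentiable at θ₀ ∈ ℝ^N. Define the proximal loss L^{prox}(W, θ) = ‖Y − WΦ(θ)‖_F² + λ‖W − W₀‖_F², its minimizer W⋆(θ) = (YΦ(θ)ᵀ + λW₀)(Φ(θ)Φ(θ)ᵀ + λI)⁻¹, and L^{prox⋆}(θ) = L^{prox}(W⋆(θ), θ). Then L^{prox⋆} is differentiable at θ₀ and its derivative at θ₀ equals the derivative at θ₀ of the map θ ↦ ‖Y − W⋆(θ₀)Φ(θ)‖_F² in which the last layer is held fixed at W⋆(θ₀). -/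
/-!
Completing the square around `W⋆(θ₀)`, which solves the normal equation
`(Y - WΦ)Φᵀ = λ(W - W₀)`, shows that it is a global minimizer of `W ↦ L^prox(W, θ₀)`, so the
partial derivative in `W` vanishes there. By the chain rule, the derivative of
`θ ↦ L^prox(W⋆(θ), θ)` is that partial applied to `DW⋆(θ₀)` (hence zero) plus the partial in `θ`
at the fixed layer `W⋆(θ₀)`, where the penalty `λ‖W⋆(θ₀) - W₀‖²` is constant. Differentiability
of `W⋆` comes from that of matrix inversion at the positive definite `ΦΦᵀ + λI`.
-/

open Matrix BigOperators

attribute [local instance] Matrix.frobeniusNormedAddCommGroup Matrix.frobeniusNormedSpace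

/-- Squared Frobenius norm of a real matrix. -/
noncomputable def sqFrob {m n : ℕ} (A : Matrix (Fin m) (Fin n) ℝ) : ℝ :=
  ∑ i, ∑ j, (A i j) ^ 2

/-- The proximal loss `L^prox(W, θ) = ‖Y − WΦ(θ)‖_F² + λ‖W − W₀‖_F²`. -/
noncomputable def proxLossTheta {o d n N : ℕ} (lam : ℝ) (Y : Matrix (Fin o) (Fin n) ℝ)
    (W₀ : Matrix (Fin o) (Fin d) ℝ) (Φ : (Fin N → ℝ) → Matrix (Fin d) (Fin n) ℝ)
    (W : Matrix (Fin o) (Fin d) ℝ) (θ : Fin N → ℝ) : ℝ :=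
  sqFrob (Y - W * Φ θ) + lam * sqFrob (W - W₀)

/-- The proximal closed-form last layer `W⋆(θ) = (YΦ(θ)ᵀ + λW₀)(Φ(θ)Φ(θ)ᵀ + λI)⁻¹`. -/
noncomputable def proxWstarTheta {o d n N : ℕ} (lam : ℝ) (Y : Matrix (Fin o) (Fin n) ℝ)
    (W₀ : Matrix (Fin o) (Fin d) ℝ) (Φ : (Fin N → ℝ) → Matrix (Fin d) (Fin n) ℝ)
    (θ : Fin N → ℝ) : Matrix (Fin o) (Fin d) ℝ :=
  (Y * (Φ θ)ᵀ + lam • W₀) * (Φ θ * (Φ θ)ᵀ + lam • (1 : Matrix (Fin d) (Fin d) ℝ))⁻¹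

attribute [local instance] Matrix.frobeniusNormedRing Matrix.frobeniusNormedAlgebra

section Envelope

variable {E F : Type*} [NormedAddCommGroup E] [NormedSpace ℝ E]
  [NormedAddCommGroup F] [NormedSpace ℝ F]

theorem hasFDerivAt_envelope {g : E × F → ℝ} {w : F → E} {θ₀ : F}
    (hw : DifferentiableAt ℝ w θ₀) (hg : DifferentiableAt ℝ g (w θ₀, θ₀))
    (hcrit : fderiv ℝ (fun W => g (W, θ₀)) (w θ₀) = 0) :
    HasFDerivAt (fun θ => g (w θ, θ)) (fderiv ℝ (fun θ => g (w θ₀, θ)) θ₀) θ₀ := by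
  set D := fderiv ℝ g (w θ₀, θ₀)
  have hD : HasFDerivAt g D (w θ₀, θ₀) := hg.hasFDerivAt
  have hslice : HasFDerivAt (fun W => g (W, θ₀)) (D.comp (ContinuousLinearMap.inl ℝ E F)) (w θ₀) :=
    hD.comp (w θ₀) (hasFDerivAt_prodMk_left (w θ₀) θ₀)
  have hpartial : D.comp (ContinuousLinearMap.inl ℝ E F) = 0 := hslice.fderiv ▸ hcrit
  have hfixed : HasFDerivAt (fun θ => g (w θ₀, θ)) (D.comp (ContinuousLinearMap.inr ℝ E F)) θ₀ :=
    hD.comp θ₀ (hasFDerivAt_prodMk_right (w θ₀) θ₀)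
  have hmoving : HasFDerivAt (fun θ => g (w θ, θ))
      (D.comp ((fderiv ℝ w θ₀).prod (ContinuousLinearMap.id ℝ F))) θ₀ :=
    hD.comp (f := fun θ => (w θ, θ)) θ₀ (hw.hasFDerivAt.prodMk (hasFDerivAt_id θ₀))
  convert hmoving using 1
  rw [hfixed.fderiv]
  ext v
  simp only [ContinuousLinearMap.comp_apply, ContinuousLinearMap.inr_apply,
    ContinuousLinearMap.prod_apply, ContinuousLinearMap.id_apply]
  rw [← D.comp_inl_add_comp_inr (fderiv ℝ w θ₀ v, v), hpartial]
  simp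

end Envelope

section Differentiability

variable {l m p : Type*} [Fintype l] [Fintype m] [Fintype p]
  {G : Type*} [NormedAddCommGroup G] [NormedSpace ℝ G] {x : G}

theorem DifferentiableAt.matrix_mul {f : G → Matrix l m ℝ} {g : G → Matrix m p ℝ}
    (hf : DifferentiableAt ℝ f x) (hg : DifferentiableAt ℝ g x) :
    DifferentiableAt ℝ (fun y => f y * g y) x :=
  ((mulLinearMap (l := l) (m := m) (n := p) ℝ (A := ℝ)).toContinuousBilinearMap
    |>.hasFDerivAt_of_bilinear hf.hasFDerivAt hg.hasFDerivAt).differentiableAt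

theorem DifferentiableAt.matrix_transpose {f : G → Matrix l m ℝ} (hf : DifferentiableAt ℝ f x) :
    DifferentiableAt ℝ (fun y => (f y)ᵀ) x :=
  (Matrix.transposeLinearEquiv l m ℝ ℝ).toLinearMap.toContinuousLinearMap.differentiableAt.comp x hf

theorem differentiable_sqFrob {a b : ℕ} : Differentiable ℝ (sqFrob (m := a) (n := b)) :=
  Differentiable.fun_sum fun i _ => Differentiable.fun_sum fun j _ =>
    (Matrix.entryLinearMap ℝ ℝ i j).toContinuousLinearMap.differentiable.pow 2

end Differentiability

section FrobeniusInner

variable {a b c : ℕ}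

def frobInner (A B : Matrix (Fin a) (Fin b) ℝ) : ℝ := ∑ i, ∑ j, A i j * B i j

theorem sqFrob_nonneg (A : Matrix (Fin a) (Fin b) ℝ) : 0 ≤ sqFrob A :=
  Finset.sum_nonneg fun _ _ => Finset.sum_nonneg fun _ _ => sq_nonneg _

theorem sqFrob_add (A B : Matrix (Fin a) (Fin b) ℝ) :
    sqFrob (A + B) = sqFrob A + 2 * frobInner A B + sqFrob B := by
  simp only [sqFrob, frobInner, Matrix.add_apply, add_sq, Finset.sum_add_distrib, Finset.mul_sum,
    mul_assoc]

theorem sqFrob_sub (A B : Matrix (Fin a) (Fin b) ℝ) :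
    sqFrob (A - B) = sqFrob A - 2 * frobInner A B + sqFrob B := by
  simp only [sqFrob, frobInner, Matrix.sub_apply, sub_sq, Finset.sum_add_distrib,
    Finset.sum_sub_distrib, Finset.mul_sum, mul_assoc]

theorem frobInner_smul_left (r : ℝ) (A B : Matrix (Fin a) (Fin b) ℝ) :
    frobInner (r • A) B = r * frobInner A B := by
  simp only [frobInner, Matrix.smul_apply, smul_eq_mul, Finset.mul_sum, mul_assoc]

theorem frobInner_mul_right (A : Matrix (Fin a) (Fin c) ℝ) (H : Matrix (Fin a) (Fin b) ℝ)
    (P : Matrix (Fin b) (Fin c) ℝ) : frobInner A (H * P) = frobInner (A * Pᵀ) H := by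
  simp only [frobInner, Matrix.mul_apply, Matrix.transpose_apply, Finset.mul_sum, Finset.sum_mul]
  refine Finset.sum_congr rfl fun i _ => ?_
  rw [Finset.sum_comm]
  exact Finset.sum_congr rfl fun k _ => Finset.sum_congr rfl fun j _ => by ring

end FrobeniusInner

theorem isUnit_mul_transpose_add_smul_one {m n : Type*} [Fintype m] [Fintype n] [DecidableEq m]
    (A : Matrix m n ℝ) {lam : ℝ} (hlam : 0 < lam) : IsUnit (A * Aᵀ + lam • (1 : Matrix m m ℝ)) :=
  (PosDef.posSemidef_add (by simpa using posSemidef_self_mul_conjTranspose A)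
    (PosDef.one.smul hlam)).isUnit

section Proximal

variable {o d n N : ℕ} {lam : ℝ} {Y : Matrix (Fin o) (Fin n) ℝ} {W₀ : Matrix (Fin o) (Fin d) ℝ}
  {Φ : (Fin N → ℝ) → Matrix (Fin d) (Fin n) ℝ}

theorem proxLossTheta_eq_of_normal_eq {θ : Fin N → ℝ} {W' : Matrix (Fin o) (Fin d) ℝ}
    (hW' : (Y - W' * Φ θ) * (Φ θ)ᵀ = lam • (W' - W₀)) (W : Matrix (Fin o) (Fin d) ℝ) :
    proxLossTheta lam Y W₀ Φ W θ =
      proxLossTheta lam Y W₀ Φ W' θ + sqFrob ((W - W') * Φ θ) + lam * sqFrob (W - W') := by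
  have hres : Y - W * Φ θ = (Y - W' * Φ θ) - (W - W') * Φ θ := by
    rw [Matrix.sub_mul]; abel
  have hprox : W - W₀ = (W' - W₀) + (W - W') := by abel
  have hcross : frobInner (Y - W' * Φ θ) ((W - W') * Φ θ) = lam * frobInner (W' - W₀) (W - W') := by
    rw [frobInner_mul_right, hW', frobInner_smul_left]
  simp only [proxLossTheta]
  rw [hres, hprox, sqFrob_sub, sqFrob_add, hcross]
  ring

theorem proxWstarTheta_normal_eq (hlam : 0 < lam) (θ : Fin N → ℝ) :
    (Y - proxWstarTheta lam Y W₀ Φ θ * Φ θ) * (Φ θ)ᵀ =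
      lam • (proxWstarTheta lam Y W₀ Φ θ - W₀) := by
  set W := proxWstarTheta lam Y W₀ Φ θ
  have hW : W * (Φ θ * (Φ θ)ᵀ) + lam • W = Y * (Φ θ)ᵀ + lam • W₀ := by
    have := Matrix.nonsing_inv_mul_cancel_right _ (Y * (Φ θ)ᵀ + lam • W₀)
      ((isUnit_iff_isUnit_det _).mp (isUnit_mul_transpose_add_smul_one (Φ θ) hlam))
    rwa [Matrix.mul_add, Matrix.mul_smul, Matrix.mul_one] at this
  rw [Matrix.sub_mul, Matrix.mul_assoc, eq_sub_of_add_eq hW, smul_sub]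
  abel

theorem proxLossTheta_proxWstarTheta_le (hlam : 0 < lam) (θ : Fin N → ℝ)
    (W : Matrix (Fin o) (Fin d) ℝ) :
    proxLossTheta lam Y W₀ Φ (proxWstarTheta lam Y W₀ Φ θ) θ ≤ proxLossTheta lam Y W₀ Φ W θ := by
  rw [proxLossTheta_eq_of_normal_eq (proxWstarTheta_normal_eq hlam θ) W]
  have := mul_nonneg hlam.le (sqFrob_nonneg (W - proxWstarTheta lam Y W₀ Φ θ))
  linarith [sqFrob_nonneg ((W - proxWstarTheta lam Y W₀ Φ θ) * Φ θ)]

theorem differentiableAt_proxWstarTheta {θ₀ : Fin N → ℝ} (hlam : 0 < lam)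
    (hΦ : DifferentiableAt ℝ Φ θ₀) : DifferentiableAt ℝ (proxWstarTheta lam Y W₀ Φ) θ₀ := by
  have hΦT := hΦ.matrix_transpose
  have hgram : DifferentiableAt ℝ (fun θ => Φ θ * (Φ θ)ᵀ + lam • (1 : Matrix (Fin d) (Fin d) ℝ))
      θ₀ := (hΦ.matrix_mul hΦT).add_const _
  have hinv := (differentiableAt_inverse (isUnit_mul_transpose_add_smul_one (Φ θ₀) hlam)).comp θ₀
    hgram
  simp only [Function.comp_def, ← Matrix.nonsing_inv_eq_ringInverse] at hinv
  exact (((differentiableAt_const Y).matrix_mul hΦT).add_const _).matrix_mul hinv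

theorem differentiableAt_proxLossTheta_uncurry {θ₀ : Fin N → ℝ} (hΦ : DifferentiableAt ℝ Φ θ₀)
    (W : Matrix (Fin o) (Fin d) ℝ) :
    DifferentiableAt ℝ (fun q : Matrix (Fin o) (Fin d) ℝ × (Fin N → ℝ) =>
      proxLossTheta lam Y W₀ Φ q.1 q.2) (W, θ₀) :=
  (differentiable_sqFrob.differentiableAt.comp _ ((differentiableAt_const Y).sub
    (differentiableAt_fst.matrix_mul (hΦ.comp _ differentiableAt_snd)))).add
    ((differentiable_sqFrob.differentiableAt.comp _ (differentiableAt_fst.sub_const W₀)).const_mul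
      lam)

end Proximal

theorem stmt_3_general (o d n N : ℕ)
    (lam : ℝ) (hlam : 0 < lam)
    (Y : Matrix (Fin o) (Fin n) ℝ) (W₀ : Matrix (Fin o) (Fin d) ℝ)
    (Φ : (Fin N → ℝ) → Matrix (Fin d) (Fin n) ℝ) (θ₀ : Fin N → ℝ)
    (hΦ : DifferentiableAt ℝ Φ θ₀) :
    DifferentiableAt ℝ
      (fun θ => proxLossTheta lam Y W₀ Φ (proxWstarTheta lam Y W₀ Φ θ) θ) θ₀ ∧
    fderiv ℝ (fun θ => proxLossTheta lam Y W₀ Φ (proxWstarTheta lam Y W₀ Φ θ) θ) θ₀ =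
      fderiv ℝ (fun θ => sqFrob (Y - proxWstarTheta lam Y W₀ Φ θ₀ * Φ θ)) θ₀ := by
  have hcrit : fderiv ℝ (fun W => proxLossTheta lam Y W₀ Φ W θ₀)
      (proxWstarTheta lam Y W₀ Φ θ₀) = 0 :=
    IsLocalMin.fderiv_eq_zero (.of_forall (proxLossTheta_proxWstarTheta_le hlam θ₀))
  have henv := hasFDerivAt_envelope (g := fun q => proxLossTheta lam Y W₀ Φ q.1 q.2)
    (differentiableAt_proxWstarTheta hlam hΦ) (differentiableAt_proxLossTheta_uncurry hΦ _) hcrit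
  exact ⟨henv.differentiableAt,
    henv.fderiv.trans (fderiv_add_const (lam * sqFrob (proxWstarTheta lam Y W₀ Φ θ₀ - W₀)))⟩

theorem stmt_3 (o d n N : ℕ) (ho : 0 < o) (hd : 0 < d) (hn : 0 < n) (hN : 0 < N)
    (lam : ℝ) (hlam : 0 < lam)
    (Y : Matrix (Fin o) (Fin n) ℝ) (W₀ : Matrix (Fin o) (Fin d) ℝ)
    (Φ : (Fin N → ℝ) → Matrix (Fin d) (Fin n) ℝ) (θ₀ : Fin N → ℝ)
    (hΦ : DifferentiableAt ℝ Φ θ₀) :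
    DifferentiableAt ℝ
      (fun θ => proxLossTheta lam Y W₀ Φ (proxWstarTheta lam Y W₀ Φ θ) θ) θ₀ ∧
    fderiv ℝ (fun θ => proxLossTheta lam Y W₀ Φ (proxWstarTheta lam Y W₀ Φ θ) θ) θ₀ =
      fderiv ℝ (fun θ => sqFrob (Y - proxWstarTheta lam Y W₀ Φ θ₀ * Φ θ)) θ₀ :=
  stmt_3_general o d n N lam hlam Y W₀ Φ θ₀ hΦ
end

section
/- Let o, d, n be positive integers, β > 0, Y ∈ ℝ^{o×n}, Φ ∈ ℝ^{d×n}, and set Y_* = YΦᵀ(ΦΦᵀ + βI)⁻¹Φ and Y_⊥ = Y − Y_*. Then Φ is a critical point of the reduced loss L* (i.e. the derivative DL*(Φ) is the zero functional) if and only if Y_*ᵀ Y_⊥ = 0. -/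
open Matrix BigOperators

attribute [local instance] Matrix.frobeniusNormedAddCommGroup Matrix.frobeniusNormedSpace

/-- The closed-form ridge solution `W*(Φ) = YΦᵀ(ΦΦᵀ + βI)⁻¹`. -/
noncomputable def Wstar {o d n : ℕ} (β : ℝ) (Y : Matrix (Fin o) (Fin n) ℝ)
    (Φ : Matrix (Fin d) (Fin n) ℝ) : Matrix (Fin o) (Fin d) ℝ :=
  Y * Φᵀ * (Φ * Φᵀ + β • (1 : Matrix (Fin d) (Fin d) ℝ))⁻¹

/-- The reduced loss `L*(Φ) = ‖Y − W*(Φ)Φ‖_F² + β‖W*(Φ)‖_F²`. -/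
noncomputable def Lstar {o d n : ℕ} (β : ℝ) (Y : Matrix (Fin o) (Fin n) ℝ)
    (Φ : Matrix (Fin d) (Fin n) ℝ) : ℝ :=
  sqFrob (Y - Wstar β Y Φ * Φ) + β * sqFrob (Wstar β Y Φ)

/-!
Write `B = ΦᵀΦ + βI`. The push-through identity `Φᵀ(ΦΦᵀ + βI)⁻¹ = B⁻¹Φᵀ` gives `W* = YB⁻¹Φᵀ` and
`Y - W*Φ = βYB⁻¹`, hence `L*(Φ) = β tr(YB⁻¹Yᵀ)`. Differentiating `B⁻¹` yields
`DL*(Φ)[H] = -2 tr(Gᵀ H)` with `G = W*ᵀ(Y - W*Φ)`, as the envelope theorem predicts. Finally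
`Y_*ᵀ Y_⊥ = ΦᵀG`, and `G = Φ(βB⁻¹YᵀYB⁻¹)` lies in the column space of `Φ`, on which `Φᵀ` is
injective; so both conditions say `G = 0`.
-/

section RidgeGram

variable {m n : Type*} [Fintype m] [DecidableEq n]

noncomputable def ridgeGram (β : ℝ) (Φ : Matrix m n ℝ) : Matrix n n ℝ :=
  Φᵀ * Φ + β • 1

variable {β : ℝ} (Φ : Matrix m n ℝ)

theorem transpose_ridgeGram : (ridgeGram β Φ)ᵀ = ridgeGram β Φ := by
  simp [ridgeGram]

variable [Fintype n]

theorem posDef_ridgeGram (hβ : 0 < β) : (ridgeGram β Φ).PosDef := by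
  refine .posSemidef_add (by simpa using posSemidef_conjTranspose_mul_self Φ) ?_
  rw [smul_one_eq_diagonal]
  exact posDef_diagonal_iff.mpr fun _ => hβ

theorem isUnit_det_ridgeGram (hβ : 0 < β) : IsUnit (ridgeGram β Φ).det :=
  (isUnit_iff_isUnit_det _).mp (posDef_ridgeGram Φ hβ).isUnit

theorem transpose_inv_ridgeGram : (ridgeGram β Φ)⁻¹ᵀ = (ridgeGram β Φ)⁻¹ := by
  rw [transpose_nonsing_inv, transpose_ridgeGram]

theorem inv_ridgeGram_mul_transpose_mul_self (hβ : 0 < β) :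
    (ridgeGram β Φ)⁻¹ * (Φᵀ * Φ) = 1 - β • (ridgeGram β Φ)⁻¹ := by
  rw [eq_sub_iff_add_eq, ← mul_smul_one, ← Matrix.mul_add]
  exact nonsing_inv_mul _ (isUnit_det_ridgeGram Φ hβ)

theorem transpose_mul_inv_mul_transpose_add_smul_one [DecidableEq m] (hβ : 0 < β) :
    Φᵀ * (Φ * Φᵀ + β • 1)⁻¹ = (ridgeGram β Φ)⁻¹ * Φᵀ := by
  have hA : IsUnit (Φ * Φᵀ + β • (1 : Matrix m m ℝ)).det := by
    simpa [ridgeGram] using isUnit_det_ridgeGram Φᵀ hβ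
  have hcomm : Φᵀ * (Φ * Φᵀ + β • 1) = ridgeGram β Φ * Φᵀ := by
    simp only [ridgeGram, Matrix.mul_add, Matrix.add_mul, Matrix.mul_smul, Matrix.smul_mul,
      Matrix.mul_one, Matrix.one_mul, Matrix.mul_assoc]
  calc Φᵀ * (Φ * Φᵀ + β • 1)⁻¹
      = (ridgeGram β Φ)⁻¹ * (Φᵀ * (Φ * Φᵀ + β • 1)) * (Φ * Φᵀ + β • 1)⁻¹ := by
        rw [hcomm, ← Matrix.mul_assoc, nonsing_inv_mul _ (isUnit_det_ridgeGram Φ hβ),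
          Matrix.one_mul]
    _ = (ridgeGram β Φ)⁻¹ * Φᵀ := by
        rw [Matrix.mul_assoc, Matrix.mul_assoc, mul_nonsing_inv _ hA, Matrix.mul_one]

end RidgeGram

theorem trace_mul_sandwich_add_transpose {m n : Type*} [Fintype m] [Fintype n]
    {C S : Matrix n n ℝ} (hC : Cᵀ = C) (hS : Sᵀ = S) (Φ H : Matrix m n ℝ) :
    trace (C * (S * (Φᵀ * H + Hᵀ * Φ) * S)) = 2 * trace ((Φ * (S * C * S))ᵀ * H) := by
  have hsym : trace (C * (S * (Hᵀ * Φ) * S)) = trace (C * (S * (Φᵀ * H) * S)) := by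
    rw [← trace_transpose]
    simpa [hC, hS, Matrix.mul_assoc] using trace_mul_comm (S * Φᵀ * H * S) C
  have hcyc : trace (C * (S * (Φᵀ * H) * S)) = trace ((Φ * (S * C * S))ᵀ * H) := by
    simpa [hC, hS, Matrix.mul_assoc] using trace_mul_comm (C * S * Φᵀ * H) S
  rw [Matrix.mul_add, Matrix.add_mul, Matrix.mul_add, trace_add, hsym, hcyc, two_mul]

theorem transpose_mul_mul_eq_zero_iff {m n k : Type*} [Fintype m] [Fintype n] [Fintype k]
    (Φ : Matrix m n ℝ) (M : Matrix n k ℝ) : Φᵀ * (Φ * M) = 0 ↔ Φ * M = 0 := by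
  refine ⟨fun h => ?_, fun h => by rw [h, Matrix.mul_zero]⟩
  rw [← trace_conjTranspose_mul_self_eq_zero_iff, conjTranspose_eq_transpose_of_trivial,
    transpose_mul, Matrix.mul_assoc, h, Matrix.mul_zero, trace_zero]

section FrobeniusCalculus

variable {l m n : Type*} [Fintype l] [Fintype m] [Fintype n]

theorem isBoundedBilinearMap_matrix_mul {𝕜 : Type*} [RCLike 𝕜] :
    IsBoundedBilinearMap 𝕜 fun p : Matrix l m 𝕜 × Matrix m n 𝕜 => p.1 * p.2 where
  add_left := Matrix.add_mul
  smul_left := Matrix.smul_mul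
  add_right := Matrix.mul_add
  smul_right c A B := Matrix.mul_smul A c B
  bound := ⟨1, one_pos, fun A B => by simpa using frobenius_norm_mul A B⟩

noncomputable def frobeniusPairing (G : Matrix m n ℝ) : Matrix m n ℝ →L[ℝ] ℝ :=
  LinearMap.toContinuousLinearMap (traceLinearMap n ℝ ℝ ∘ₗ mulLeftLinearMap n ℝ Gᵀ)

@[simp]
theorem frobeniusPairing_apply (G H : Matrix m n ℝ) : frobeniusPairing G H = trace (Gᵀ * H) :=
  rfl

theorem frobeniusPairing_eq_zero_iff {G : Matrix m n ℝ} : frobeniusPairing G = 0 ↔ G = 0 := by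
  refine ⟨fun h => ?_, fun h => by ext; simp [h]⟩
  rw [← trace_conjTranspose_mul_self_eq_zero_iff, conjTranspose_eq_transpose_of_trivial]
  simpa using congrArg (· G) h

end FrobeniusCalculus

theorem sqFrob_eq_trace {m n : ℕ} (A : Matrix (Fin m) (Fin n) ℝ) : sqFrob A = trace (A * Aᵀ) := by
  simp [sqFrob, trace, mul_apply, sq]

section RidgeSolution

variable {o d n : ℕ} {β : ℝ} (Y : Matrix (Fin o) (Fin n) ℝ) (Φ : Matrix (Fin d) (Fin n) ℝ)

theorem Wstar_eq (hβ : 0 < β) : Wstar β Y Φ = Y * (ridgeGram β Φ)⁻¹ * Φᵀ := by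
  rw [Wstar, Matrix.mul_assoc, transpose_mul_inv_mul_transpose_add_smul_one Φ hβ, Matrix.mul_assoc]

theorem sub_Wstar_mul (hβ : 0 < β) : Y - Wstar β Y Φ * Φ = β • (Y * (ridgeGram β Φ)⁻¹) := by
  rw [Wstar_eq Y Φ hβ, Matrix.mul_assoc, Matrix.mul_assoc,
    inv_ridgeGram_mul_transpose_mul_self Φ hβ, Matrix.mul_sub, Matrix.mul_one, Matrix.mul_smul,
    sub_sub_cancel]

theorem Lstar_eq_trace (hβ : 0 < β) :
    Lstar β Y Φ = β * trace (Y * (ridgeGram β Φ)⁻¹ * Yᵀ) := by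
  rw [Lstar, sub_Wstar_mul Y Φ hβ, Wstar_eq Y Φ hβ, sqFrob_eq_trace, sqFrob_eq_trace]
  have hS := transpose_inv_ridgeGram (β := β) Φ
  have hG := inv_ridgeGram_mul_transpose_mul_self Φ hβ
  set S := (ridgeGram β Φ)⁻¹
  have hW : Y * S * Φᵀ * (Y * S * Φᵀ)ᵀ = Y * S * Yᵀ - β • (Y * S * S * Yᵀ) := by
    calc Y * S * Φᵀ * (Y * S * Φᵀ)ᵀ = Y * (S * (Φᵀ * Φ)) * S * Yᵀ := by
          simp only [transpose_mul, transpose_transpose, hS, Matrix.mul_assoc]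
      _ = Y * S * Yᵀ - β • (Y * S * S * Yᵀ) := by
          simp only [hG, Matrix.mul_sub, Matrix.sub_mul, Matrix.mul_one, Matrix.mul_smul,
            Matrix.smul_mul, Matrix.mul_assoc]
  rw [hW, transpose_smul, transpose_mul, hS, Matrix.smul_mul, Matrix.mul_smul, trace_sub,
    trace_smul, trace_smul, trace_smul, smul_eq_mul, smul_eq_mul, smul_eq_mul]
  simp only [Matrix.mul_assoc]
  ring

theorem Wstar_transpose_mul_sub_Wstar_mul (hβ : 0 < β) :
    (Wstar β Y Φ)ᵀ * (Y - Wstar β Y Φ * Φ) =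
      Φ * (β • ((ridgeGram β Φ)⁻¹ * (Yᵀ * Y) * (ridgeGram β Φ)⁻¹)) := by
  rw [sub_Wstar_mul Y Φ hβ, Wstar_eq Y Φ hβ]
  simp only [transpose_mul, transpose_transpose, transpose_inv_ridgeGram, Matrix.mul_smul,
    Matrix.mul_assoc]

end RidgeSolution

section Derivative

attribute [local instance] Matrix.frobeniusNormedRing Matrix.frobeniusNormedAlgebra

variable {o d n : ℕ} {β : ℝ} (Y : Matrix (Fin o) (Fin n) ℝ) (Φ : Matrix (Fin d) (Fin n) ℝ)

theorem hasFDerivAt_Lstar (hβ : 0 < β) :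
    HasFDerivAt (Lstar β Y)
      ((-2 : ℝ) • frobeniusPairing ((Wstar β Y Φ)ᵀ * (Y - Wstar β Y Φ * Φ))) Φ := by
  set S := (ridgeGram β Φ)⁻¹
  have hGram := ((isBoundedBilinearMap_matrix_mul.hasFDerivAt (Φᵀ, Φ)).comp
    (f := fun X => (Xᵀ, X)) Φ
    ((transposeLinearEquiv (Fin d) (Fin n) ℝ ℝ).toContinuousLinearEquiv.toContinuousLinearMap.prod
      (ContinuousLinearMap.id ℝ _)).hasFDerivAt).add_const (β • 1)
  have hInv : HasFDerivAt Ring.inverse (-ContinuousLinearMap.mulLeftRight ℝ _ S S)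
      (ridgeGram β Φ) := by
    have hu := (posDef_ridgeGram Φ hβ).isUnit
    simpa [S, coe_units_inv] using hasFDerivAt_ringInverse (𝕜 := ℝ) hu.unit
  have hL := ((frobeniusPairing (Yᵀ * Y)).hasFDerivAt.comp Φ (hInv.comp Φ hGram)).const_mul β
  have hfun : Lstar β Y = fun X : Matrix (Fin d) (Fin n) ℝ =>
      β * frobeniusPairing (Yᵀ * Y) (Ring.inverse (ridgeGram β X)) := by
    ext X
    rw [Lstar_eq_trace Y X hβ, frobeniusPairing_apply, ← nonsing_inv_eq_ringInverse,
      transpose_mul, transpose_transpose, trace_mul_cycle, Matrix.mul_assoc]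
  rw [hfun]
  refine hL.congr_fderiv ?_
  ext H
  change β * trace ((Yᵀ * Y)ᵀ * -(S * (Φᵀ * H + Hᵀ * Φ) * S)) =
    -2 * trace (((Wstar β Y Φ)ᵀ * (Y - Wstar β Y Φ * Φ))ᵀ * H)
  rw [Matrix.mul_neg, trace_neg,
    trace_mul_sandwich_add_transpose (by simp) (transpose_inv_ridgeGram Φ),
    Wstar_transpose_mul_sub_Wstar_mul Y Φ hβ, Matrix.mul_smul, transpose_smul, Matrix.smul_mul,
    trace_smul, smul_eq_mul, transpose_mul Yᵀ, transpose_transpose]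
  ring

end Derivative

theorem stmt_6_general (o d n : ℕ)
    (β : ℝ) (hβ : 0 < β)
    (Y : Matrix (Fin o) (Fin n) ℝ) (Φ : Matrix (Fin d) (Fin n) ℝ) :
    (DifferentiableAt ℝ (Lstar β Y) Φ ∧ fderiv ℝ (Lstar β Y) Φ = 0) ↔
      (Y * Φᵀ * (Φ * Φᵀ + β • (1 : Matrix (Fin d) (Fin d) ℝ))⁻¹ * Φ)ᵀ *
        (Y - Y * Φᵀ * (Φ * Φᵀ + β • (1 : Matrix (Fin d) (Fin d) ℝ))⁻¹ * Φ) = 0 := by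
  have hL := hasFDerivAt_Lstar Y Φ hβ
  have hG := Wstar_transpose_mul_sub_Wstar_mul Y Φ hβ
  change _ ↔ (Wstar β Y Φ * Φ)ᵀ * (Y - Wstar β Y Φ * Φ) = 0
  rw [transpose_mul, Matrix.mul_assoc, hG, transpose_mul_mul_eq_zero_iff, ← hG, hL.fderiv,
    smul_eq_zero, frobeniusPairing_eq_zero_iff]
  simp [hL.differentiableAt]

theorem stmt_6 (o d n : ℕ) (ho : 0 < o) (hd : 0 < d) (hn : 0 < n)
    (β : ℝ) (hβ : 0 < β)
    (Y : Matrix (Fin o) (Fin n) ℝ) (Φ : Matrix (Fin d) (Fin n) ℝ) :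
    (DifferentiableAt ℝ (Lstar β Y) Φ ∧ fderiv ℝ (Lstar β Y) Φ = 0) ↔
      (Y * Φᵀ * (Φ * Φᵀ + β • (1 : Matrix (Fin d) (Fin d) ℝ))⁻¹ * Φ)ᵀ *
        (Y - Y * Φᵀ * (Φ * Φᵀ + β • (1 : Matrix (Fin d) (Fin d) ℝ))⁻¹ * Φ) = 0 :=
  stmt_6_general o d n β hβ Y Φ
end
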